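/- Let f be μ-strongly convex and L-smooth, X nonempty closed convex, 0 < t ≤ 1/L with tμ < 1, x* = argmin_{x∈X} f(x), Ω ≥ 0, ε > 0 with 4Ω/ε < tμ, and C = (1 - tμ)/(1 - 4Ω/ε) ∈ (0,1). Let D ≥ ‖x^0 - x*‖² and k_max ≥ log(ε²/(4D))/log(C) (with ε²/4 < D). If the inexact projected gradient iterates x^{k+1} = proj_X(x^k - ĝ^k), ‖t∇f(x^k) - ĝ^k‖ ≤ Ω, satisfy ‖x^{j+1} - x*‖ ≥ ε/2 for all j < k_max, then ‖x^{k_max} - x*‖ ≤ ε/2 and f(x^{k_max}) - f(x*) ≤ (ε² - 4Ωε)/(8t). -/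

import Mathlib

/-!
While the iterate stays `ε/2`-far from `x*`, the gradient error `Ω‖x^{k+1} - x*‖` is at most
`(2Ω/ε)‖x^{k+1} - x*‖²` and can be absorbed into the one-step estimate of projected gradient
descent, which turns into the contraction `‖x^{k+1} - x*‖² ≤ C ‖x^k - x*‖²`. After `k_max` steps
`C^{k_max} D ≤ ε²/4`; feeding the bound on `‖x^{k_max - 1} - x*‖²` back into the one-step
estimate at the last step bounds the optimality gap.
-/

open scoped RealInnerProductSpace

/-- `p` is the Euclidean projection of `z` onto the set `X`. -/
def IsProj {n : ℕ} (X : Set (EuclideanSpace ℝ (Fin n))) (z p : EuclideanSpace ℝ (Fin n)) : Prop :=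
  p ∈ X ∧ ∀ y ∈ X, ‖p - z‖ ≤ ‖y - z‖

theorem IsProj.inner_sub_le_zero {n : ℕ} {X : Set (EuclideanSpace ℝ (Fin n))} (hX : Convex ℝ X)
    {z p : EuclideanSpace ℝ (Fin n)} (h : IsProj X z p) {y : EuclideanSpace ℝ (Fin n)}
    (hy : y ∈ X) : ⟪z - p, y - p⟫ ≤ 0 := by
  have : Nonempty X := ⟨⟨p, h.1⟩⟩
  have hinf : ‖z - p‖ = ⨅ w : X, ‖z - (w : EuclideanSpace ℝ (Fin n))‖ := by
    refine le_antisymm (le_ciInf fun w => ?_) (ciInf_le ⟨0, ?_⟩ (⟨p, h.1⟩ : X))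
    · rw [norm_sub_rev z, norm_sub_rev z]
      exact h.2 w w.2
    · rintro _ ⟨w, rfl⟩
      exact norm_nonneg _
  exact (norm_eq_iInf_iff_real_inner_le_zero hX h.1).1 hinf y hy

theorem IsProj.inexact_gradient_step_le {n : ℕ} {f : EuclideanSpace ℝ (Fin n) → ℝ}
    {g : EuclideanSpace ℝ (Fin n) → EuclideanSpace ℝ (Fin n)} {X : Set (EuclideanSpace ℝ (Fin n))}
    (hX : Convex ℝ X) {μ L t Ω : ℝ} (ht : 0 ≤ t) (htL : t * L ≤ 1)
    (hsc : ∀ x y, μ / 2 * ‖x - y‖ ^ 2 ≤ f x - f y - ⟪g y, x - y⟫)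
    (hsm : ∀ x y, f x - f y - ⟪g y, x - y⟫ ≤ L / 2 * ‖x - y‖ ^ 2)
    {xs x x' gh : EuclideanSpace ℝ (Fin n)} (hxs : xs ∈ X) (herr : ‖t • g x - gh‖ ≤ Ω)
    (hstep : IsProj X (x - gh) x') :
    t * (f x' - f xs) ≤
      (1 - t * μ) / 2 * ‖x - xs‖ ^ 2 - 1 / 2 * ‖x' - xs‖ ^ 2 + Ω * ‖x' - xs‖ := by
  have hvi : ⟪gh, x' - xs⟫ ≤ ⟪x - x', x' - xs⟫ := by
    have h := hstep.inner_sub_le_zero hX hxs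
    rw [show x - gh - x' = (x - x') - gh by abel, ← neg_sub x' xs, inner_neg_right,
      inner_sub_left] at h
    linarith
  have herr' : ⟪t • g x - gh, x' - xs⟫ ≤ Ω * ‖x' - xs‖ :=
    (real_inner_le_norm _ _).trans (by gcongr)
  -- the three-point identity `2⟪x - x', x' - xs⟫ = ‖x - xs‖² - ‖x - x'‖² - ‖x' - xs‖²`
  have hpar := norm_add_sq_real (x - x') (x' - xs)
  rw [sub_add_sub_cancel] at hpar
  have hgrad : t * ⟪g x, x' - xs⟫ = ⟪t • g x - gh, x' - xs⟫ + ⟪gh, x' - xs⟫ := by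
    rw [← real_inner_smul_left, ← inner_add_left, sub_add_cancel]
  have hsplit : ⟪g x, x' - xs⟫ = ⟪g x, x' - x⟫ - ⟪g x, xs - x⟫ := by
    rw [← inner_sub_right, sub_sub_sub_cancel_right]
  have hlower := hsc xs x
  have hupper := hsm x' x
  rw [norm_sub_rev xs] at hlower
  rw [norm_sub_rev x'] at hupper
  have hL : t * (L / 2 * ‖x - x'‖ ^ 2) ≤ 1 / 2 * ‖x - x'‖ ^ 2 := by
    nlinarith [sq_nonneg ‖x - x'‖]
  nlinarith [mul_le_mul_of_nonneg_left hlower ht, mul_le_mul_of_nonneg_left hupper ht]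

theorem mul_le_div_mul_sq_of_half_le {Ω ε r : ℝ} (hΩ : 0 ≤ Ω) (hε : 0 < ε) (hr : ε / 2 ≤ r) :
    Ω * r ≤ 4 * Ω / ε / 2 * r ^ 2 := by
  have hr0 : 0 ≤ r := le_trans (by positivity) hr
  calc Ω * r = 4 * Ω / ε / 2 * (ε / 2 * r) := by field_simp; ring
    _ ≤ 4 * Ω / ε / 2 * (r * r) := by gcongr
    _ = 4 * Ω / ε / 2 * r ^ 2 := by ring

theorem le_pow_mul_of_forall_lt_le_mul {u : ℕ → ℝ} {C D : ℝ} {K : ℕ} (hC : 0 ≤ C) (h0 : u 0 ≤ D)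
    (hu : ∀ j < K, u (j + 1) ≤ C * u j) : ∀ k ≤ K, u k ≤ C ^ k * D := by
  intro k hk
  induction k with
  | zero => simpa using h0
  | succ m ih =>
    calc u (m + 1) ≤ C * u m := hu m hk
      _ ≤ C * (C ^ m * D) := mul_le_mul_of_nonneg_left (ih (by omega)) hC
      _ = C ^ (m + 1) * D := by ring

theorem pow_mul_le_of_log_div_log_le {C D a : ℝ} {k : ℕ} (hC0 : 0 < C) (hC1 : C < 1)
    (hD : 0 < D) (ha : 0 < a) (hk : Real.log (a / D) / Real.log C ≤ k) : C ^ k * D ≤ a := by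
  have hlogC : Real.log C < 0 := Real.log_neg hC0 hC1
  have hlog : Real.log (C ^ k) ≤ Real.log (a / D) := by
    rw [Real.log_pow]
    rwa [div_le_iff_of_neg hlogC] at hk
  have := (Real.log_le_log_iff (by positivity) (by positivity)).1 hlog
  rwa [le_div_iff₀ hD] at this

theorem stmt16_general {n : ℕ} (f : EuclideanSpace ℝ (Fin n) → ℝ)
    (g : EuclideanSpace ℝ (Fin n) → EuclideanSpace ℝ (Fin n))
    (X : Set (EuclideanSpace ℝ (Fin n)))
    (hXcv : Convex ℝ X)
    (μ L t Ω ε D : ℝ) (hL : 0 < L) (ht : 0 < t) (ht' : t ≤ 1 / L)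
    (htμ : t * μ < 1)
    (hΩ : 0 ≤ Ω) (hε : 0 < ε) (hΩε : 4 * Ω / ε < t * μ)
    (hsc : ∀ x y, μ / 2 * ‖x - y‖ ^ 2 ≤ f x - f y - ⟪g y, x - y⟫)
    (hsm : ∀ x y, f x - f y - ⟪g y, x - y⟫ ≤ L / 2 * ‖x - y‖ ^ 2)
    (xs : EuclideanSpace ℝ (Fin n)) (hxsX : xs ∈ X) (hxs : ∀ y ∈ X, f xs ≤ f y)
    (x : ℕ → EuclideanSpace ℝ (Fin n))
    (gh : ℕ → EuclideanSpace ℝ (Fin n))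
    (hgerr : ∀ k, ‖t • g (x k) - gh k‖ ≤ Ω)
    (hstep : ∀ k, IsProj X (x k - gh k) (x (k + 1)))
    (hD : ‖x 0 - xs‖ ^ 2 ≤ D) (hεD : ε ^ 2 / 4 < D)
    (kmax : ℕ)
    (hkmax : Real.log (ε ^ 2 / (4 * D)) / Real.log ((1 - t * μ) / (1 - 4 * Ω / ε))
      ≤ (kmax : ℝ))
    (hfar : ∀ j < kmax, ε / 2 ≤ ‖x (j + 1) - xs‖) :
    ‖x kmax - xs‖ ≤ ε / 2 ∧ f (x kmax) - f xs ≤ (ε ^ 2 - 4 * Ω * ε) / (8 * t) := by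
  have htL : t * L ≤ 1 := by rwa [le_div_iff₀ hL] at ht'
  set δ := 1 - 4 * Ω / ε with hδ_def
  set C := (1 - t * μ) / δ
  have hδ : 0 < δ := by linarith
  have hC0 : 0 < C := div_pos (by linarith) hδ
  have hC1 : C < 1 := (div_lt_one hδ).2 (by linarith)
  have hfar_step : ∀ j < kmax, t * (f (x (j + 1)) - f xs) + δ / 2 * ‖x (j + 1) - xs‖ ^ 2 ≤
      (1 - t * μ) / 2 * ‖x j - xs‖ ^ 2 := fun j hj => by
    have hone := (hstep j).inexact_gradient_step_le hXcv ht.le htL hsc hsm hxsX (hgerr j)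
    have habsorb := mul_le_div_mul_sq_of_half_le hΩ hε (hfar j hj)
    linarith
  have hgeo : ∀ k ≤ kmax, ‖x k - xs‖ ^ 2 ≤ C ^ k * D := by
    refine le_pow_mul_of_forall_lt_le_mul hC0.le hD fun j hj => ?_
    have hj' := hfar_step j hj
    have hgap := mul_nonneg ht.le (sub_nonneg.2 (hxs _ (hstep j).1))
    rw [div_mul_eq_mul_div, le_div_iff₀ hδ]
    linarith
  have hD0 : 0 < D := lt_trans (by positivity) hεD
  have hkey : C ^ kmax * D ≤ ε ^ 2 / 4 :=
    pow_mul_le_of_log_div_log_le hC0 hC1 hD0 (by positivity) (by rwa [div_div])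
  refine ⟨?_, ?_⟩
  · have := (hgeo kmax le_rfl).trans hkey
    nlinarith [norm_nonneg (x kmax - xs)]
  obtain ⟨m, rfl⟩ : ∃ m, kmax = m + 1 :=
    Nat.exists_eq_succ_of_ne_zero fun h => by subst h; rw [pow_zero, one_mul] at hkey; linarith
  have hδC : δ * C = 1 - t * μ := mul_div_cancel₀ _ hδ.ne'
  calc f (x (m + 1)) - f xs
      ≤ (1 - t * μ) / 2 * ‖x m - xs‖ ^ 2 / t := by
        rw [le_div_iff₀ ht]
        nlinarith [hfar_step m m.lt_succ_self, sq_nonneg ‖x (m + 1) - xs‖]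
    _ ≤ (1 - t * μ) / 2 * (C ^ m * D) / t := by
        have : 0 ≤ 1 - t * μ := by linarith
        gcongr
        exact hgeo m m.le_succ
    _ = δ / 2 * (C ^ (m + 1) * D) / t := by rw [← hδC]; ring
    _ ≤ δ / 2 * (ε ^ 2 / 4) / t := by gcongr
    _ = (ε ^ 2 - 4 * Ω * ε) / (8 * t) := by
        rw [hδ_def]
        field_simp
        ring

theorem stmt16 {n : ℕ} (f : EuclideanSpace ℝ (Fin n) → ℝ)
    (g : EuclideanSpace ℝ (Fin n) → EuclideanSpace ℝ (Fin n))
    (X : Set (EuclideanSpace ℝ (Fin n)))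
    (hXne : X.Nonempty) (hXcl : IsClosed X) (hXcv : Convex ℝ X)
    (μ L t Ω ε D : ℝ) (hμ : 0 < μ) (hL : 0 < L) (ht : 0 < t) (ht' : t ≤ 1 / L)
    (htμ : t * μ < 1)
    (hΩ : 0 ≤ Ω) (hε : 0 < ε) (hΩε : 4 * Ω / ε < t * μ)
    (hsc : ∀ x y, μ / 2 * ‖x - y‖ ^ 2 ≤ f x - f y - ⟪g y, x - y⟫)
    (hsm : ∀ x y, f x - f y - ⟪g y, x - y⟫ ≤ L / 2 * ‖x - y‖ ^ 2)
    (xs : EuclideanSpace ℝ (Fin n)) (hxsX : xs ∈ X) (hxs : ∀ y ∈ X, f xs ≤ f y)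
    (x : ℕ → EuclideanSpace ℝ (Fin n)) (hx0 : x 0 ∈ X)
    (gh : ℕ → EuclideanSpace ℝ (Fin n))
    (hgerr : ∀ k, ‖t • g (x k) - gh k‖ ≤ Ω)
    (hstep : ∀ k, IsProj X (x k - gh k) (x (k + 1)))
    (hD : ‖x 0 - xs‖ ^ 2 ≤ D) (hεD : ε ^ 2 / 4 < D)
    (kmax : ℕ)
    (hkmax : Real.log (ε ^ 2 / (4 * D)) / Real.log ((1 - t * μ) / (1 - 4 * Ω / ε))
      ≤ (kmax : ℝ))
    (hfar : ∀ j < kmax, ε / 2 ≤ ‖x (j + 1) - xs‖) :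
    ‖x kmax - xs‖ ≤ ε / 2 ∧ f (x kmax) - f xs ≤ (ε ^ 2 - 4 * Ω * ε) / (8 * t) :=
  stmt16_general f g X hXcv μ L t Ω ε D hL ht ht' htμ hΩ hε hΩε hsc hsm xs hxsX hxs x gh hgerr hstep
    hD hεD kmax hkmax hfar
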